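/- The almost complex structure I is integrable in the following sense: for all X, Y ∈ 𝔪, the 2-forms d_Ma and d_Ma' are of type (1,1) with respect to I, i.e. d_Ma(IX,IY) = d_Ma(X,Y) and d_Ma'(IX,IY) = d_Ma'(X,Y), while the complex 2-form d_Mp + i·d_Mp' is of type (2,0) with respect to I, i.e. d_Mp(IX,Y) = −d_Mp'(X,Y) and d_Mp'(IX,Y) = d_Mp(X,Y); and the analogous identities obtained by the simultaneous cyclic substitutions (a,a',p,p') → (b,b',q,q') → (c,c',r,r') → (a,a',p,p') also hold. -/

import Mathlib

/-!
Common setup: 𝔤 = 𝔰𝔬(7) realised as real skew-symmetric 7×7 matrices with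
bracket `bk X Y = X*Y - Y*X`; the matrices A, B, C, A', B', C', P, Q, R, P', Q', R', E;
the subspaces 𝔪 (`mm`) and 𝔲(3) (`u3`); the dual functionals a, …, r' (written
`fa, …, fr'`), given by the explicit formulas that characterise them as the unique
linear functionals on 𝔰𝔬(7) vanishing on 𝔲(3) whose restrictions to 𝔪 are dual to
the chosen basis; the invariant forms; the endomorphisms I, J, K; and the
Chevalley–Eilenberg differentials `dM1`, `dM2` restricted to 𝔪.
-/

open Matrix

noncomputable section

/-- Ambient space of real 7×7 matrices (rows/columns indexed by `Fin 7`). -/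
abbrev M7 : Type := Matrix (Fin 7) (Fin 7) ℝ

/-- `Eij i j`: the skew matrix with `(i,j)` entry `1`, `(j,i)` entry `-1`, all others `0`. -/
def Eij (i j : Fin 7) : M7 := Matrix.single i j 1 - Matrix.single j i 1

def mA  : M7 := Eij 0 1
def mB  : M7 := Eij 0 2
def mC  : M7 := Eij 0 3
def mA' : M7 := Eij 0 4
def mB' : M7 := Eij 0 5
def mC' : M7 := Eij 0 6
def mP  : M7 := Eij 2 3 - Eij 5 6
def mQ  : M7 := Eij 3 1 - Eij 6 4
def mR  : M7 := Eij 1 2 - Eij 4 5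
def mP' : M7 := Eij 2 6 - Eij 3 5
def mQ' : M7 := Eij 3 4 - Eij 1 6
def mR' : M7 := Eij 1 5 - Eij 2 4
def mE  : M7 := Eij 1 4 + Eij 2 5 + Eij 3 6

/-- The Lie bracket `[X,Y] = XY - YX`. -/
def bk (X Y : M7) : M7 := X * Y - Y * X

/-- 𝔰𝔬(7): the skew-symmetric matrices. -/
def so7 : Set M7 := {X : M7 | Xᵀ = -X}

/-- The first standard basis vector e₀ of ℝ⁷. -/
def e0 : Fin 7 → ℝ := fun i => if i = 0 then 1 else 0

/-- 𝔲(3) = {X ∈ 𝔰𝔬(7) : X e₀ = 0 and XE = EX}. -/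
def u3 : Set M7 := {X : M7 | Xᵀ = -X ∧ X.mulVec e0 = 0 ∧ X * mE = mE * X}

/-- 𝔪: the span of the twelve matrices A, …, R'. -/
def mm : Submodule ℝ M7 :=
  Submodule.span ℝ ({mA, mB, mC, mA', mB', mC', mP, mQ, mR, mP', mQ', mR'} : Set M7)

/- The linear functionals on 𝔰𝔬(7) vanishing on 𝔲(3) whose restrictions to 𝔪 form the
dual basis of the basis A, …, R' (given by their explicit formulas on skew matrices,
extended to all of `M7`). -/
def fa  (X : M7) : ℝ := (X 0 1 - X 1 0) / 2
def fb  (X : M7) : ℝ := (X 0 2 - X 2 0) / 2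
def fc  (X : M7) : ℝ := (X 0 3 - X 3 0) / 2
def fa' (X : M7) : ℝ := (X 0 4 - X 4 0) / 2
def fb' (X : M7) : ℝ := (X 0 5 - X 5 0) / 2
def fc' (X : M7) : ℝ := (X 0 6 - X 6 0) / 2
def fp  (X : M7) : ℝ := (X 2 3 - X 3 2 - X 5 6 + X 6 5) / 4
def fq  (X : M7) : ℝ := (X 3 1 - X 1 3 - X 6 4 + X 4 6) / 4
def fr  (X : M7) : ℝ := (X 1 2 - X 2 1 - X 4 5 + X 5 4) / 4
def fp' (X : M7) : ℝ := (X 2 6 - X 6 2 - X 3 5 + X 5 3) / 4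
def fq' (X : M7) : ℝ := (X 3 4 - X 4 3 - X 1 6 + X 6 1) / 4
def fr' (X : M7) : ℝ := (X 1 5 - X 5 1 - X 2 4 + X 4 2) / 4

/-- Wedge of two 1-forms: `(α∧β)(X,Y) = α(X)β(Y) - β(X)α(Y)`. -/
def wdg2 (α β : M7 → ℝ) (X Y : M7) : ℝ := α X * β Y - β X * α Y

/-- Wedge of three 1-forms (determinant convention). -/
def wdg3 (α β γ : M7 → ℝ) (X Y Z : M7) : ℝ :=
  α X * β Y * γ Z - α X * γ Y * β Z - β X * α Y * γ Z
    + β X * γ Y * α Z + γ X * α Y * β Z - γ X * β Y * α Z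

/-- ω₀ = a'∧a + b'∧b + c'∧c. -/
def om0 (X Y : M7) : ℝ := wdg2 fa' fa X Y + wdg2 fb' fb X Y + wdg2 fc' fc X Y

/-- ω̃₀ = p'∧p + q'∧q + r'∧r. -/
def omt0 (X Y : M7) : ℝ := wdg2 fp' fp X Y + wdg2 fq' fq X Y + wdg2 fr' fr X Y

/-- ω_J = p∧a - p'∧a' + q∧b - q'∧b' + r∧c - r'∧c'. -/
def omJ (X Y : M7) : ℝ :=
  wdg2 fp fa X Y - wdg2 fp' fa' X Y + wdg2 fq fb X Y - wdg2 fq' fb' X Y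
    + wdg2 fr fc X Y - wdg2 fr' fc' X Y

/-- ω_K = p'∧a + p∧a' + q'∧b + q∧b' + r'∧c + r∧c'. -/
def omK (X Y : M7) : ℝ :=
  wdg2 fp' fa X Y + wdg2 fp fa' X Y + wdg2 fq' fb X Y + wdg2 fq fb' X Y
    + wdg2 fr' fc X Y + wdg2 fr fc' X Y

/-- ω_I = λω₀ + μω̃₀. -/
def omI (lm mu : ℝ) (X Y : M7) : ℝ := lm * om0 X Y + mu * omt0 X Y

/-- The metric g = λ(a⊗a + … + c'⊗c') + μ(p⊗p + … + r'⊗r'). -/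
def gmet (lm mu : ℝ) (X Y : M7) : ℝ :=
  lm * (fa X * fa Y + fb X * fb Y + fc X * fc Y
      + fa' X * fa' Y + fb' X * fb' Y + fc' X * fc' Y)
  + mu * (fp X * fp Y + fq X * fq Y + fr X * fr Y
      + fp' X * fp' Y + fq' X * fq' Y + fr' X * fr' Y)

/-- The endomorphism I of 𝔪 (extended to `M7` via the dual functionals):
A↦A', …, R↦R', A'↦-A, …, R'↦-R. -/
def Iop (X : M7) : M7 :=
  fa X • mA' + fb X • mB' + fc X • mC' + fp X • mP' + fq X • mQ' + fr X • mR'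
    - fa' X • mA - fb' X • mB - fc' X • mC - fp' X • mP - fq' X • mQ - fr' X • mR

/-- The endomorphism J of 𝔪: A↦λP, …, C'↦-λR', P↦-μA, …, R'↦μC'. -/
def Jop (lm mu : ℝ) (X : M7) : M7 :=
  (lm * fa X) • mP + (lm * fb X) • mQ + (lm * fc X) • mR
    - (lm * fa' X) • mP' - (lm * fb' X) • mQ' - (lm * fc' X) • mR'
    - (mu * fp X) • mA - (mu * fq X) • mB - (mu * fr X) • mC
    + (mu * fp' X) • mA' + (mu * fq' X) • mB' + (mu * fr' X) • mC'

/-- The endomorphism K of 𝔪: A↦λP', …, C'↦λR, P'↦-μA, …, R↦-μC'. -/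
def Kop (lm mu : ℝ) (X : M7) : M7 :=
  (lm * fa X) • mP' + (lm * fb X) • mQ' + (lm * fc X) • mR'
    + (lm * fa' X) • mP + (lm * fb' X) • mQ + (lm * fc' X) • mR
    - (mu * fp' X) • mA - (mu * fq' X) • mB - (mu * fr' X) • mC
    - (mu * fp X) • mA' - (mu * fq X) • mB' - (mu * fr X) • mC'

/-- `d_Mα(X,Y) = -α([X,Y])` for a 1-form α. -/
def dM1 (α : M7 → ℝ) (X Y : M7) : ℝ := -α (bk X Y)

/-- `d_Mω(X,Y,Z) = -ω([X,Y],Z) + ω([X,Z],Y) - ω([Y,Z],X)` for a 2-form ω. -/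
def dM2 (ω : M7 → M7 → ℝ) (X Y Z : M7) : ℝ :=
  -ω (bk X Y) Z + ω (bk X Z) Y - ω (bk Y Z) X

/-- For an endomorphism T and a 3-form β, `(Tβ)(X,Y,Z) = -β(TX,TY,TZ)`. -/
def act3 (T : M7 → M7) (β : M7 → M7 → M7 → ℝ) (X Y Z : M7) : ℝ :=
  -β (T X) (T Y) (T Z)

/-- Φ = Σ_cyc (a∧b∧r - a'∧b'∧r + a∧b'∧r' + a'∧b∧r'). -/
def Phi (X Y Z : M7) : ℝ :=
  (wdg3 fa fb fr X Y Z - wdg3 fa' fb' fr X Y Z + wdg3 fa fb' fr' X Y Z + wdg3 fa' fb fr' X Y Z)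
  + (wdg3 fb fc fp X Y Z - wdg3 fb' fc' fp X Y Z + wdg3 fb fc' fp' X Y Z + wdg3 fb' fc fp' X Y Z)
  + (wdg3 fc fa fq X Y Z - wdg3 fc' fa' fq X Y Z + wdg3 fc fa' fq' X Y Z + wdg3 fc' fa fq' X Y Z)

/-- Ψ = Σ_cyc (p∧q∧r - 3 p∧q'∧r'). -/
def Psi (X Y Z : M7) : ℝ :=
  (wdg3 fp fq fr X Y Z - 3 * wdg3 fp fq' fr' X Y Z)
  + (wdg3 fq fr fp X Y Z - 3 * wdg3 fq fr' fp' X Y Z)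
  + (wdg3 fr fp fq X Y Z - 3 * wdg3 fr fp' fq' X Y Z)

/-- β_I = J d_Mω_J + K d_Mω_K. -/
def betaI (lm mu : ℝ) (X Y Z : M7) : ℝ :=
  act3 (Jop lm mu) (dM2 omJ) X Y Z + act3 (Kop lm mu) (dM2 omK) X Y Z

/-- β_J = K d_Mω_K + I d_Mω_I. -/
def betaJ (lm mu : ℝ) (X Y Z : M7) : ℝ :=
  act3 (Kop lm mu) (dM2 omK) X Y Z + act3 Iop (dM2 (omI lm mu)) X Y Z

/-- β_K = I d_Mω_I + J d_Mω_J. -/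
def betaK (lm mu : ℝ) (X Y Z : M7) : ℝ :=
  act3 Iop (dM2 (omI lm mu)) X Y Z + act3 (Jop lm mu) (dM2 omJ) X Y Z

/-- ψ⁽³⁾ = (1/12)(β_I + β_J + β_K). -/
def psi3 (lm mu : ℝ) (X Y Z : M7) : ℝ :=
  (1/12) * (betaI lm mu X Y Z + betaJ lm mu X Y Z + betaK lm mu X Y Z)

end

/-!
On 𝔪 the differentials of the coframe are given by the Maurer–Cartan equations
`d a = b∧r - c∧q + b'∧r' - c'∧q'`, `d a' = b∧r' - c∧q' - b'∧r + c'∧q`,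
`d p = (b∧c - b'∧c')/2`, `d p' = (b∧c' + b'∧c)/2`, and their cyclic images; they are obtained by
writing elements of 𝔪 in coordinates and computing brackets of 7×7 matrices. The coframe
transforms under `I` by `a ∘ I = -a'`, `a' ∘ I = a`, and likewise for `b, c, p, q, r`. So
`d a + i d a' = (b - i b')∧(r + i r') - (c - i c')∧(q + i q')` is of type (1,1), while
`d p + i d p' = (b + i b')∧(c + i c')/2` is of type (2,0).
-/

def mmOfCoords (x : Fin 12 → ℝ) : M7 :=
  !![0, x 0, x 1, x 2, x 3, x 4, x 5;
    -x 0, 0, x 8, -x 7, 0, x 11, -x 10;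
    -x 1, -x 8, 0, x 6, -x 11, 0, x 9;
    -x 2, x 7, -x 6, 0, x 10, -x 9, 0;
    -x 3, 0, x 11, -x 10, 0, -x 8, x 7;
    -x 4, -x 11, 0, x 9, x 8, 0, -x 6;
    -x 5, x 10, -x 9, 0, -x 7, x 6, 0]

def mmBasis : Fin 12 → M7 := ![mA, mB, mC, mA', mB', mC', mP, mQ, mR, mP', mQ', mR']

lemma mm_eq_span_range : mm = Submodule.span ℝ (Set.range mmBasis) := by
  simp only [mm, mmBasis, Matrix.range_cons, Matrix.range_empty, Set.singleton_union, Set.union_empty]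

lemma sum_smul_mmBasis (x : Fin 12 → ℝ) : ∑ i, x i • mmBasis i = mmOfCoords x := by
  ext i j
  fin_cases i <;> fin_cases j <;>
    simp [Fin.sum_univ_succ, mmBasis, mmOfCoords, mA, mB, mC, mA', mB', mC', mP, mQ, mR, mP', mQ', mR', Eij]

lemma exists_eq_mmOfCoords {X : M7} (hX : X ∈ mm) : ∃ x, X = mmOfCoords x := by
  rw [mm_eq_span_range, Submodule.mem_span_range_iff_exists_fun] at hX
  obtain ⟨x, rfl⟩ := hX
  exact ⟨x, sum_smul_mmBasis x⟩

lemma mmOfCoords_mem (x : Fin 12 → ℝ) : mmOfCoords x ∈ mm := by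
  rw [← sum_smul_mmBasis, mm_eq_span_range]
  exact Submodule.sum_mem _ fun i _ => Submodule.smul_mem _ _ (Submodule.subset_span ⟨i, rfl⟩)

@[simp] lemma fa_mmOfCoords (x : Fin 12 → ℝ) : fa (mmOfCoords x) = x 0 := by
  simp only [fa, mmOfCoords, of_apply, cons_val_zero, cons_val_one]
  ring
@[simp] lemma fb_mmOfCoords (x : Fin 12 → ℝ) : fb (mmOfCoords x) = x 1 := by
  simp only [fb, mmOfCoords, of_apply, cons_val_zero, cons_val]
  ring
@[simp] lemma fc_mmOfCoords (x : Fin 12 → ℝ) : fc (mmOfCoords x) = x 2 := by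
  simp only [fc, mmOfCoords, of_apply, cons_val_zero, cons_val]
  ring
@[simp] lemma fa'_mmOfCoords (x : Fin 12 → ℝ) : fa' (mmOfCoords x) = x 3 := by
  simp only [fa', mmOfCoords, of_apply, cons_val_zero, cons_val]
  ring
@[simp] lemma fb'_mmOfCoords (x : Fin 12 → ℝ) : fb' (mmOfCoords x) = x 4 := by
  simp only [fb', mmOfCoords, of_apply, cons_val_zero, cons_val]
  ring
@[simp] lemma fc'_mmOfCoords (x : Fin 12 → ℝ) : fc' (mmOfCoords x) = x 5 := by
  simp only [fc', mmOfCoords, of_apply, cons_val_zero, cons_val]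
  ring
@[simp] lemma fp_mmOfCoords (x : Fin 12 → ℝ) : fp (mmOfCoords x) = x 6 := by
  simp only [fp, mmOfCoords, of_apply, cons_val]
  ring
@[simp] lemma fq_mmOfCoords (x : Fin 12 → ℝ) : fq (mmOfCoords x) = x 7 := by
  simp only [fq, mmOfCoords, of_apply, cons_val_zero, cons_val_one, cons_val]
  ring
@[simp] lemma fr_mmOfCoords (x : Fin 12 → ℝ) : fr (mmOfCoords x) = x 8 := by
  simp only [fr, mmOfCoords, of_apply, cons_val_zero, cons_val_one, cons_val]
  ring
@[simp] lemma fp'_mmOfCoords (x : Fin 12 → ℝ) : fp' (mmOfCoords x) = x 9 := by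
  simp only [fp', mmOfCoords, of_apply, cons_val]
  ring
@[simp] lemma fq'_mmOfCoords (x : Fin 12 → ℝ) : fq' (mmOfCoords x) = x 10 := by
  simp only [fq', mmOfCoords, of_apply, cons_val_zero, cons_val_one, cons_val]
  ring
@[simp] lemma fr'_mmOfCoords (x : Fin 12 → ℝ) : fr' (mmOfCoords x) = x 11 := by
  simp only [fr', mmOfCoords, of_apply, cons_val_zero, cons_val_one, cons_val]
  ring

lemma Iop_eq_mmOfCoords (X : M7) :
    Iop X = mmOfCoords ![-fa' X, -fb' X, -fc' X, fa X, fb X, fc X,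
      -fp' X, -fq' X, -fr' X, fp X, fq X, fr X] := by
  rw [← sum_smul_mmBasis]
  simp only [Iop, mmBasis, Fin.sum_univ_succ, Fin.sum_univ_zero, cons_val_zero, cons_val_one, cons_val,
    Fin.succ_zero_eq_one, Fin.succ_one_eq_two, Fin.reduceSucc]
  module

lemma Iop_mem (X : M7) : Iop X ∈ mm := Iop_eq_mmOfCoords X ▸ mmOfCoords_mem _

lemma fa_Iop (X : M7) : fa (Iop X) = -fa' X := by
  simp [Iop_eq_mmOfCoords]
lemma fa'_Iop (X : M7) : fa' (Iop X) = fa X := by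
  simp [Iop_eq_mmOfCoords]
lemma fb_Iop (X : M7) : fb (Iop X) = -fb' X := by
  simp [Iop_eq_mmOfCoords]
lemma fb'_Iop (X : M7) : fb' (Iop X) = fb X := by
  simp [Iop_eq_mmOfCoords]
lemma fc_Iop (X : M7) : fc (Iop X) = -fc' X := by
  simp [Iop_eq_mmOfCoords]
lemma fc'_Iop (X : M7) : fc' (Iop X) = fc X := by
  simp [Iop_eq_mmOfCoords]
lemma fp_Iop (X : M7) : fp (Iop X) = -fp' X := by
  simp [Iop_eq_mmOfCoords]
lemma fp'_Iop (X : M7) : fp' (Iop X) = fp X := by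
  simp [Iop_eq_mmOfCoords]
lemma fq_Iop (X : M7) : fq (Iop X) = -fq' X := by
  simp [Iop_eq_mmOfCoords]
lemma fq'_Iop (X : M7) : fq' (Iop X) = fq X := by
  simp [Iop_eq_mmOfCoords]
lemma fr_Iop (X : M7) : fr (Iop X) = -fr' X := by
  simp [Iop_eq_mmOfCoords]
lemma fr'_Iop (X : M7) : fr' (Iop X) = fr X := by
  simp [Iop_eq_mmOfCoords]

lemma dM1_fa {X Y : M7} (hX : X ∈ mm) (hY : Y ∈ mm) :
    dM1 fa X Y = wdg2 fb fr X Y - wdg2 fc fq X Y + wdg2 fb' fr' X Y - wdg2 fc' fq' X Y := by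
  obtain ⟨x, rfl⟩ := exists_eq_mmOfCoords hX
  obtain ⟨y, rfl⟩ := exists_eq_mmOfCoords hY
  simp only [dM1, bk, wdg2, fa, fb, fc, fb', fc', fq, fr, fq', fr', Matrix.sub_apply, Matrix.mul_apply,
    Fin.sum_univ_seven, mmOfCoords, of_apply, cons_val_zero, cons_val_one, cons_val]
  ring

lemma dM1_fb {X Y : M7} (hX : X ∈ mm) (hY : Y ∈ mm) :
    dM1 fb X Y = wdg2 fc fp X Y - wdg2 fa fr X Y + wdg2 fc' fp' X Y - wdg2 fa' fr' X Y := by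
  obtain ⟨x, rfl⟩ := exists_eq_mmOfCoords hX
  obtain ⟨y, rfl⟩ := exists_eq_mmOfCoords hY
  simp only [dM1, bk, wdg2, fb, fa, fc, fa', fc', fp, fr, fp', fr', Matrix.sub_apply, Matrix.mul_apply,
    Fin.sum_univ_seven, mmOfCoords, of_apply, cons_val_zero, cons_val_one, cons_val]
  ring

lemma dM1_fc {X Y : M7} (hX : X ∈ mm) (hY : Y ∈ mm) :
    dM1 fc X Y = wdg2 fa fq X Y - wdg2 fb fp X Y + wdg2 fa' fq' X Y - wdg2 fb' fp' X Y := by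
  obtain ⟨x, rfl⟩ := exists_eq_mmOfCoords hX
  obtain ⟨y, rfl⟩ := exists_eq_mmOfCoords hY
  simp only [dM1, bk, wdg2, fc, fa, fb, fa', fb', fp, fq, fp', fq', Matrix.sub_apply, Matrix.mul_apply,
    Fin.sum_univ_seven, mmOfCoords, of_apply, cons_val_zero, cons_val_one, cons_val]
  ring

lemma dM1_fa' {X Y : M7} (hX : X ∈ mm) (hY : Y ∈ mm) :
    dM1 fa' X Y = wdg2 fb fr' X Y - wdg2 fc fq' X Y - wdg2 fb' fr X Y + wdg2 fc' fq X Y := by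
  obtain ⟨x, rfl⟩ := exists_eq_mmOfCoords hX
  obtain ⟨y, rfl⟩ := exists_eq_mmOfCoords hY
  simp only [dM1, bk, wdg2, fa', fb, fc, fb', fc', fq, fr, fq', fr', Matrix.sub_apply, Matrix.mul_apply,
    Fin.sum_univ_seven, mmOfCoords, of_apply, cons_val_zero, cons_val_one, cons_val]
  ring

lemma dM1_fb' {X Y : M7} (hX : X ∈ mm) (hY : Y ∈ mm) :
    dM1 fb' X Y = wdg2 fc fp' X Y - wdg2 fa fr' X Y - wdg2 fc' fp X Y + wdg2 fa' fr X Y := by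
  obtain ⟨x, rfl⟩ := exists_eq_mmOfCoords hX
  obtain ⟨y, rfl⟩ := exists_eq_mmOfCoords hY
  simp only [dM1, bk, wdg2, fb', fa, fc, fa', fc', fp, fr, fp', fr', Matrix.sub_apply, Matrix.mul_apply,
    Fin.sum_univ_seven, mmOfCoords, of_apply, cons_val_zero, cons_val_one, cons_val]
  ring

lemma dM1_fc' {X Y : M7} (hX : X ∈ mm) (hY : Y ∈ mm) :
    dM1 fc' X Y = wdg2 fa fq' X Y - wdg2 fb fp' X Y - wdg2 fa' fq X Y + wdg2 fb' fp X Y := by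
  obtain ⟨x, rfl⟩ := exists_eq_mmOfCoords hX
  obtain ⟨y, rfl⟩ := exists_eq_mmOfCoords hY
  simp only [dM1, bk, wdg2, fc', fa, fb, fa', fb', fp, fq, fp', fq', Matrix.sub_apply, Matrix.mul_apply,
    Fin.sum_univ_seven, mmOfCoords, of_apply, cons_val_zero, cons_val_one, cons_val]
  ring

lemma dM1_fp {X Y : M7} (hX : X ∈ mm) (hY : Y ∈ mm) :
    dM1 fp X Y = (wdg2 fb fc X Y - wdg2 fb' fc' X Y) / 2 := by
  obtain ⟨x, rfl⟩ := exists_eq_mmOfCoords hX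
  obtain ⟨y, rfl⟩ := exists_eq_mmOfCoords hY
  simp only [dM1, bk, wdg2, fp, fb, fc, fb', fc', Matrix.sub_apply, Matrix.mul_apply,
    Fin.sum_univ_seven, mmOfCoords, of_apply, cons_val_zero, cons_val_one, cons_val]
  ring

lemma dM1_fq {X Y : M7} (hX : X ∈ mm) (hY : Y ∈ mm) :
    dM1 fq X Y = (wdg2 fc fa X Y - wdg2 fc' fa' X Y) / 2 := by
  obtain ⟨x, rfl⟩ := exists_eq_mmOfCoords hX
  obtain ⟨y, rfl⟩ := exists_eq_mmOfCoords hY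
  simp only [dM1, bk, wdg2, fq, fa, fc, fa', fc', Matrix.sub_apply, Matrix.mul_apply,
    Fin.sum_univ_seven, mmOfCoords, of_apply, cons_val_zero, cons_val_one, cons_val]
  ring

lemma dM1_fr {X Y : M7} (hX : X ∈ mm) (hY : Y ∈ mm) :
    dM1 fr X Y = (wdg2 fa fb X Y - wdg2 fa' fb' X Y) / 2 := by
  obtain ⟨x, rfl⟩ := exists_eq_mmOfCoords hX
  obtain ⟨y, rfl⟩ := exists_eq_mmOfCoords hY
  simp only [dM1, bk, wdg2, fr, fa, fb, fa', fb', Matrix.sub_apply, Matrix.mul_apply,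
    Fin.sum_univ_seven, mmOfCoords, of_apply, cons_val_zero, cons_val_one, cons_val]
  ring

lemma dM1_fp' {X Y : M7} (hX : X ∈ mm) (hY : Y ∈ mm) :
    dM1 fp' X Y = (wdg2 fb fc' X Y + wdg2 fb' fc X Y) / 2 := by
  obtain ⟨x, rfl⟩ := exists_eq_mmOfCoords hX
  obtain ⟨y, rfl⟩ := exists_eq_mmOfCoords hY
  simp only [dM1, bk, wdg2, fp', fb, fc, fb', fc', Matrix.sub_apply, Matrix.mul_apply,
    Fin.sum_univ_seven, mmOfCoords, of_apply, cons_val_zero, cons_val_one, cons_val]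
  ring

lemma dM1_fq' {X Y : M7} (hX : X ∈ mm) (hY : Y ∈ mm) :
    dM1 fq' X Y = (wdg2 fc fa' X Y + wdg2 fc' fa X Y) / 2 := by
  obtain ⟨x, rfl⟩ := exists_eq_mmOfCoords hX
  obtain ⟨y, rfl⟩ := exists_eq_mmOfCoords hY
  simp only [dM1, bk, wdg2, fq', fa, fc, fa', fc', Matrix.sub_apply, Matrix.mul_apply,
    Fin.sum_univ_seven, mmOfCoords, of_apply, cons_val_zero, cons_val_one, cons_val]
  ring

lemma dM1_fr' {X Y : M7} (hX : X ∈ mm) (hY : Y ∈ mm) :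
    dM1 fr' X Y = (wdg2 fa fb' X Y + wdg2 fa' fb X Y) / 2 := by
  obtain ⟨x, rfl⟩ := exists_eq_mmOfCoords hX
  obtain ⟨y, rfl⟩ := exists_eq_mmOfCoords hY
  simp only [dM1, bk, wdg2, fr', fa, fb, fa', fb', Matrix.sub_apply, Matrix.mul_apply,
    Fin.sum_univ_seven, mmOfCoords, of_apply, cons_val_zero, cons_val_one, cons_val]
  ring

/-- integrability of I: d_Ma and d_Ma' are of type (1,1) for I, while
d_Mp + i d_Mp' is of type (2,0) for I; together with the cyclic analogues. -/
theorem stmt19 :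
    ∀ X ∈ mm, ∀ Y ∈ mm,
      (dM1 fa (Iop X) (Iop Y) = dM1 fa X Y) ∧
      (dM1 fa' (Iop X) (Iop Y) = dM1 fa' X Y) ∧
      (dM1 fp (Iop X) Y = -(dM1 fp' X Y)) ∧
      (dM1 fp' (Iop X) Y = dM1 fp X Y) ∧
      (dM1 fb (Iop X) (Iop Y) = dM1 fb X Y) ∧
      (dM1 fb' (Iop X) (Iop Y) = dM1 fb' X Y) ∧
      (dM1 fq (Iop X) Y = -(dM1 fq' X Y)) ∧
      (dM1 fq' (Iop X) Y = dM1 fq X Y) ∧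
      (dM1 fc (Iop X) (Iop Y) = dM1 fc X Y) ∧
      (dM1 fc' (Iop X) (Iop Y) = dM1 fc' X Y) ∧
      (dM1 fr (Iop X) Y = -(dM1 fr' X Y)) ∧
      (dM1 fr' (Iop X) Y = dM1 fr X Y) := by
  intro X hX Y hY
  have hIX := Iop_mem X
  have hIY := Iop_mem Y
  refine ⟨?_, ?_, ?_, ?_, ?_, ?_, ?_, ?_, ?_, ?_, ?_, ?_⟩ <;>
    simp only [dM1_fa, dM1_fb, dM1_fc, dM1_fa', dM1_fb', dM1_fc', dM1_fp, dM1_fq, dM1_fr, dM1_fp',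
      dM1_fq', dM1_fr', hX, hY, hIX, hIY, wdg2, fa_Iop, fb_Iop, fc_Iop, fa'_Iop, fb'_Iop, fc'_Iop,
      fp_Iop, fq_Iop, fr_Iop, fp'_Iop, fq'_Iop, fr'_Iop] <;>
    ring
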